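/- arXiv:1701.01244 — 2 statements merged into one kernel-verified Lean document; each statement's English description precedes it below -/
import Mathlib

section
/- Let 0 < H < 1/2, T > 0, d ≥ 1, and let b : [0,T] × ℝ^d → ℝ^d be a continuous bounded measurable function. Suppose that for every x ∈ ℝ^d the SDE X_t = x + ∫_0^t b(s, X_s) ds + B^H_t, t ∈ [0,T], has a strong solution X(x) driven by a fixed d-dimensional fractional Brownian motion B^H, and that pathwise uniqueness holds for this SDE. Then lim_{x → x_0} E[ sup_{0 ≤ t ≤ T} |X_t(x) − X_t(x_0)|² ] = 0 for every x_0 ∈ ℝ^d. -/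
/-!
Fix `uₙ → x₀`. For almost every `ω` the paths `X(uₙ)(ω)` solve the integral equations
`f t = uₙ + ∫₀ᵗ b(s, f s) ds + B_t(ω)` with one continuous forcing term, so they are bounded at
each time and share the modulus of continuity `C |t - s| + |B_t(ω) - B_s(ω)|`. Hence a
subsequence converging at a countable dense set of times converges on all of `[0, T]`, and by
continuity of `b` and dominated convergence its limit solves the equation started at `x₀`.

Pathwise uniqueness only applies to a limit chosen measurably in `ω`. The lexicographically least
cluster point of a bounded sequence in `ℝ^ℕ` is an explicit expression in countably many `liminf`s
and `sup`s, hence measurable, and its first coordinate is a `liminf`. Putting `ℓ(X(uₙ)_t)` first,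
pathwise uniqueness yields `liminf ℓ(X(uₙ)_t) = ℓ(X(x₀)_t)` a.s.; with `ℓ = ±` coordinates this is
convergence `X(uₙ)_t → X(x₀)_t` at the dense times. Equicontinuity upgrades it to uniform
convergence on `[0, T]`, and `|X(uₙ)_t - X(x₀)_t| ≤ |uₙ - x₀| + 2 C T` lets dominated convergence
conclude.
-/
open MeasureTheory ProbabilityTheory

noncomputable section


/-- A `d`-dimensional fractional Brownian motion with Hurst parameter `H` on `[0,T]`:
a measurable, a.s. continuous process starting at `0`, which is jointly Gaussian
(every finite linear combination of its components is Gaussian) and whose components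
are centered with covariance `E[B^i_t B^j_s] = δ_{ij} (t^{2H} + s^{2H} - |t-s|^{2H})/2`. -/
def IsFBM {Ω : Type} [MeasurableSpace Ω] (P : Measure Ω) (d : ℕ) (H T : ℝ)
    (B : ℝ → Ω → EuclideanSpace ℝ (Fin d)) : Prop :=
  (∀ t, Measurable (B t)) ∧
  (∀ᵐ ω ∂P, ContinuousOn (fun t => B t ω) (Set.Icc 0 T)) ∧
  (∀ ω, B 0 ω = 0) ∧
  (∀ (n : ℕ) (t : Fin n → ℝ) (i : Fin n → Fin d) (a : Fin n → ℝ),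
      (∀ k, t k ∈ Set.Icc (0:ℝ) T) →
      ∃ v : NNReal, P.map (fun ω => ∑ k, a k * B (t k) ω (i k)) = gaussianReal 0 v) ∧
  (∀ i j : Fin d, ∀ s ∈ Set.Icc (0:ℝ) T, ∀ t ∈ Set.Icc (0:ℝ) T,
      ∫ ω, (B t ω i) * (B s ω j) ∂P =
        if i = j then (t ^ (2*H) + s ^ (2*H) - |t - s| ^ (2*H)) / 2 else 0)

/-- `X` is a solution (on the given space) of the SDE `X_t = x + ∫_0^t b(s,X_s) ds + B_t`
on `[0,T]`: a measurable process with a.s. continuous paths satisfying the integral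
equation a.s. -/
def SolvesSDE {Ω : Type} [MeasurableSpace Ω] (P : Measure Ω) (d : ℕ) (T : ℝ)
    (b : ℝ → EuclideanSpace ℝ (Fin d) → EuclideanSpace ℝ (Fin d))
    (B : ℝ → Ω → EuclideanSpace ℝ (Fin d)) (x : EuclideanSpace ℝ (Fin d))
    (X : ℝ → Ω → EuclideanSpace ℝ (Fin d)) : Prop :=
  (∀ t, Measurable (X t)) ∧
  (∀ᵐ ω ∂P, ContinuousOn (fun t => X t ω) (Set.Icc 0 T)) ∧
  (∀ᵐ ω ∂P, ∀ t ∈ Set.Icc (0:ℝ) T,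
      X t ω = x + (∫ s in Set.Ioc (0:ℝ) t, b s (X s ω)) + B t ω)

/-- A strong solution: a solution that is adapted to the filtration generated by `B`,
augmented by the `P`-null sets (i.e. each `X t` agrees a.s. with a random variable that
is measurable with respect to the σ-algebra generated by `(B s)_{0 ≤ s ≤ t}`). -/
def StrongSolution {Ω : Type} [MeasurableSpace Ω] (P : Measure Ω) (d : ℕ) (T : ℝ)
    (b : ℝ → EuclideanSpace ℝ (Fin d) → EuclideanSpace ℝ (Fin d))
    (B : ℝ → Ω → EuclideanSpace ℝ (Fin d)) (x : EuclideanSpace ℝ (Fin d))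
    (X : ℝ → Ω → EuclideanSpace ℝ (Fin d)) : Prop :=
  SolvesSDE P d T b B x X ∧
  ∀ t ∈ Set.Icc (0:ℝ) T, ∃ Y : Ω → EuclideanSpace ℝ (Fin d),
    Measurable[⨆ s ∈ Set.Icc (0:ℝ) t, MeasurableSpace.comap (B s) inferInstance] Y ∧
    X t =ᵐ[P] Y

/-- Pathwise uniqueness for the SDE `dX_t = b(t,X_t) dt + dB^H_t` on `[0,T]`:
any two solutions defined on the same probability space, driven by the same fractional
Brownian motion and with the same initial condition, are indistinguishable on `[0,T]`. -/
def PathwiseUniqueness (d : ℕ) (H T : ℝ)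
    (b : ℝ → EuclideanSpace ℝ (Fin d) → EuclideanSpace ℝ (Fin d)) : Prop :=
  ∀ (Ω : Type) (_ : MeasurableSpace Ω) (P : Measure Ω), IsProbabilityMeasure P →
    ∀ B : ℝ → Ω → EuclideanSpace ℝ (Fin d), IsFBM P d H T B →
    ∀ (x : EuclideanSpace ℝ (Fin d)) (X Y : ℝ → Ω → EuclideanSpace ℝ (Fin d)),
      SolvesSDE P d T b B x X → SolvesSDE P d T b B x Y →
      ∀ᵐ ω ∂P, ∀ t ∈ Set.Icc (0:ℝ) T, X t ω = Y t ω

open Filter Set Topology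

-- The lexicographically least cluster point `r` of `n ↦ a n` in `ℝ^ℕ`: as `j → ∞` the penalty
-- `j * ∑_{l<m} |a n l - r l|` restricts the liminf in coordinate `m` to the indices `n` at which
-- the earlier coordinates are close to `r`.
def lexClusterPt (a : ℕ → ℕ → ℝ) (m : ℕ) : ℝ :=
  ⨆ j : ℕ, liminf (fun n => a n m + j * ∑ l ∈ (Finset.range m).attach,
    |a n l - lexClusterPt a l|) atTop
termination_by m
decreasing_by exact Finset.mem_range.1 l.2

def lexPenalty (a : ℕ → ℕ → ℝ) (m n : ℕ) : ℝ :=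
  ∑ l ∈ Finset.range m, |a n l - lexClusterPt a l|

namespace lexClusterPt

variable (a : ℕ → ℕ → ℝ)

theorem eq_iSup (m : ℕ) :
    lexClusterPt a m = ⨆ j : ℕ, liminf (fun n => a n m + j * lexPenalty a m n) atTop := by
  have h (n : ℕ) : ∑ l ∈ (Finset.range m).attach, |a n l - lexClusterPt a l| = lexPenalty a m n :=
    Finset.sum_attach _ fun l => |a n l - lexClusterPt a l|
  rw [lexClusterPt]
  simp only [h]

theorem zero_eq_liminf : lexClusterPt a 0 = liminf (fun n => a n 0) atTop := by
  rw [eq_iSup]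
  simp [lexPenalty]

theorem measurable {Ω : Type*} [MeasurableSpace Ω] {a : Ω → ℕ → ℕ → ℝ}
    (ha : ∀ n l, Measurable fun ω => a ω n l) (m : ℕ) :
    Measurable fun ω => lexClusterPt (a ω) m := by
  induction m using Nat.strong_induction_on with
  | _ m ih =>
    simp_rw [eq_iSup, lexPenalty]
    exact .iSup fun j => .liminf fun n => (ha n m).add <| measurable_const.mul <|
      Finset.measurable_sum _ fun l hl => ((ha n l).sub (ih l (Finset.mem_range.1 hl))).abs

end lexClusterPt

theorem lexPenalty_succ (a : ℕ → ℕ → ℝ) (m n : ℕ) :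
    lexPenalty a (m + 1) n = lexPenalty a m n + |a n m - lexClusterPt a m| :=
  Finset.sum_range_succ _ m

theorem lexPenalty_nonneg (a : ℕ → ℕ → ℝ) (m n : ℕ) : 0 ≤ lexPenalty a m n :=
  Finset.sum_nonneg fun _ _ => abs_nonneg _

theorem abs_sub_lexClusterPt_le_lexPenalty (a : ℕ → ℕ → ℝ) {l m : ℕ} (h : l < m) (n : ℕ) :
    |a n l - lexClusterPt a l| ≤ lexPenalty a m n :=
  Finset.single_le_sum (f := fun l => |a n l - lexClusterPt a l|)
    (fun _ _ => abs_nonneg _) (Finset.mem_range.2 h)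

theorem frequently_add_abs_sub_iSup_liminf_lt {x p : ℕ → ℝ} {M : ℝ} (hx : ∀ n, |x n| ≤ M)
    (hp : ∀ n, 0 ≤ p n) (hp_small : ∀ ε > 0, ∃ᶠ n in atTop, p n < ε) {ε : ℝ} (hε : 0 < ε) :
    ∃ᶠ n in atTop,
      p n + |x n - ⨆ j : ℕ, liminf (fun n => x n + j * p n) atTop| < ε := by
  set A : ℕ → ℝ := fun j => liminf (fun n => x n + j * p n) atTop
  have hbdd (j : ℕ) : IsBoundedUnder (· ≥ ·) atTop (fun n => x n + j * p n) :=
    isBoundedUnder_of ⟨-M, fun n => by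
      nlinarith [neg_abs_le (x n), hx n, hp n, (Nat.cast_nonneg j : (0:ℝ) ≤ j)]⟩
  have hfreq_le (j : ℕ) : ∃ᶠ n in atTop, x n + j * p n ≤ M + 1 := by
    refine (hp_small (1 / (j + 1)) (by positivity)).mono fun n hn => ?_
    have : (j : ℝ) * p n ≤ 1 := by
      calc (j : ℝ) * p n ≤ (j + 1) * (1 / (j + 1)) := by gcongr <;> linarith [hp n]
        _ = 1 := by field_simp
    linarith [le_abs_self (x n), hx n]
  have hA_bdd : BddAbove (range A) :=
    ⟨M + 1, forall_mem_range.2 fun j => liminf_le_of_frequently_le (hfreq_le j) (hbdd j)⟩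
  set r := ⨆ j, A j
  set η := ε / 5 with hη
  have hη_pos : 0 < η := by positivity
  obtain ⟨j₀, hj₀⟩ : ∃ j₀, r - η < A j₀ := exists_lt_of_lt_ciSup (by linarith)
  have hlow : ∀ᶠ n in atTop, r - η < x n + j₀ * p n := eventually_lt_of_lt_liminf hj₀ (hbdd j₀)
  have hup : ∃ᶠ n in atTop, x n + (2 * j₀ + 1 : ℕ) * p n < r + η :=
    frequently_lt_of_liminf_lt (IsCoboundedUnder.of_frequently_le (hfreq_le _))
      ((le_ciSup hA_bdd _).trans_lt (by linarith))
  -- subtracting the two bounds leaves `(j₀ + 1) * p n < 2 η`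
  refine (hup.and_eventually hlow).mono fun n ⟨h₁, h₂⟩ => ?_
  push_cast at h₁
  have hq : 0 ≤ (j₀ : ℝ) * p n := mul_nonneg j₀.cast_nonneg (hp n)
  have hpq : (j₀ : ℝ) * p n + p n < 2 * η := by linarith
  have hxr : |x n - r| < 3 * η := abs_sub_lt_iff.2 ⟨by linarith [hp n], by linarith [hp n]⟩
  linarith

theorem frequently_lexPenalty_lt {a : ℕ → ℕ → ℝ} {M : ℕ → ℝ} (hM : ∀ n l, |a n l| ≤ M l)
    (m : ℕ) {ε : ℝ} (hε : 0 < ε) : ∃ᶠ n in atTop, lexPenalty a m n < ε := by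
  induction m generalizing ε with
  | zero => simpa [lexPenalty] using Frequently.of_forall (f := (atTop : Filter ℕ)) fun _ => hε
  | succ m ih =>
    simp_rw [lexPenalty_succ, lexClusterPt.eq_iSup a m]
    exact frequently_add_abs_sub_iSup_liminf_lt (hM · m) (lexPenalty_nonneg a m)
      (fun _ => ih) hε

theorem exists_tendsto_lexClusterPt {a : ℕ → ℕ → ℝ} {M : ℕ → ℝ} (hM : ∀ n l, |a n l| ≤ M l) :
    ∃ φ : ℕ → ℕ, StrictMono φ ∧
      ∀ l, Tendsto (fun k => a (φ k) l) atTop (𝓝 (lexClusterPt a l)) := by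
  obtain ⟨φ, hφ, hpen⟩ := extraction_forall_of_frequently fun k =>
    frequently_lexPenalty_lt hM (k + 1) (Nat.one_div_pos_of_nat (n := k))
  refine ⟨φ, hφ, fun l => tendsto_sub_nhds_zero_iff.1 ?_⟩
  refine squeeze_zero_norm' ?_ tendsto_one_div_add_atTop_nhds_zero_nat
  filter_upwards [eventually_ge_atTop l] with k hk
  exact (abs_sub_lexClusterPt_le_lexPenalty a (Nat.lt_succ_of_le hk) _).trans (hpen k).le

theorem exists_measurable_subseq_tendsto {Ω ι : Type*} [MeasurableSpace Ω] [Encodable ι]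
    (a : Ω → ℕ → ι → ℝ) (ha : ∀ n i, Measurable fun ω => a ω n i) (i₀ : ι) :
    ∃ r : Ω → ι → ℝ, (∀ i, Measurable fun ω => r ω i) ∧
      (∀ ω, r ω i₀ = liminf (fun n => a ω n i₀) atTop) ∧
      ∀ ω, (∀ i, ∃ M, ∀ n, |a ω n i| ≤ M) →
        ∃ φ : ℕ → ℕ, StrictMono φ ∧ ∀ i, Tendsto (fun k => a ω (φ k) i) atTop (𝓝 (r ω i)) := by
  classical
  -- `i₀` goes first, where `lexClusterPt` is a plain `liminf`
  let e : ℕ → ι := fun l => Nat.casesOn l i₀ fun l => (Encodable.decode l).getD i₀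
  let idx : ι → ℕ := fun i => if i = i₀ then 0 else Encodable.encode i + 1
  have he (i : ι) : e (idx i) = i := by
    by_cases h : i = i₀ <;> simp [e, idx, h]
  refine ⟨fun ω i => lexClusterPt (fun n l => a ω n (e l)) (idx i),
    fun i => lexClusterPt.measurable (fun n l => ha n (e l)) _, fun ω => ?_, fun ω hbdd => ?_⟩
  · simp only [idx, if_pos rfl]
    exact lexClusterPt.zero_eq_liminf _
  · choose M hM using hbdd
    obtain ⟨φ, hφ, hlim⟩ := exists_tendsto_lexClusterPt (M := fun l => M (e l)) fun n l => hM _ n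
    exact ⟨φ, hφ, fun i => by simpa only [he] using hlim (idx i)⟩

theorem Equicontinuous.cauchySeq_of_dense {ι X α : Type*} [Nonempty ι] [SemilatticeSup ι]
    [TopologicalSpace X] [PseudoMetricSpace α] {F : ι → X → α} (hF : Equicontinuous F)
    {s : Set X} (hs : Dense s) (h : ∀ y ∈ s, CauchySeq fun i => F i y) (x : X) :
    CauchySeq fun i => F i x := by
  refine Metric.cauchySeq_iff.2 fun ε hε => ?_
  obtain ⟨y, hy, hxy⟩ : ∃ y ∈ s, ∀ i, dist (F i x) (F i y) < ε / 3 :=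
    ((mem_closure_iff_frequently.1 (hs x)).and_eventually
      (Metric.equicontinuousAt_iff_right.1 (hF x) _ (by positivity))).exists
  obtain ⟨N, hN⟩ := Metric.cauchySeq_iff.1 (h y hy) (ε / 3) (by positivity)
  refine ⟨N, fun m hm n hn => ?_⟩
  calc dist (F m x) (F n x) ≤ dist (F m x) (F m y) + dist (F m y) (F n y) + dist (F n y) (F n x) :=
        dist_triangle4 _ _ _ _
    _ < ε := by linarith [hxy m, dist_comm (F n y) (F n x) ▸ hxy n, hN m hm n hn]

theorem Equicontinuous.tendstoUniformly_of_dense {ι X α : Type*} [TopologicalSpace X]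
    [CompactSpace X] [UniformSpace α] {F : ι → X → α} {f : X → α} {l : Filter ι}
    (hF : Equicontinuous F) (hf : Continuous f) {s : Set X} (hs : Dense s)
    (h : ∀ y ∈ s, Tendsto (fun i => F i y) l (𝓝 (f y))) : TendstoUniformly F f l := by
  have hall (x : X) : Tendsto (fun i => F i x) l (𝓝 (f x)) :=
    (hF.isClosed_setOfPred_tendsto hf).closure_subset_iff.2 h (hs x)
  exact UniformFun.tendsto_iff_tendstoUniformly.1 <|
    (hF.tendsto_uniformFun_iff_pi l f).2 (tendsto_pi_nhds.2 hall)

theorem ContinuousOn.limUnder_comap_comp {ι X Y : Type*} [TopologicalSpace X] [TopologicalSpace Y]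
    [T2Space Y] [Nonempty Y] {f : X → Y} {s : Set X} (hf : ContinuousOn f s) {g : ι → X}
    (hg : ∀ i, g i ∈ s) {x : X} (hx : x ∈ s) (hxg : x ∈ closure (range g)) :
    limUnder (comap g (𝓝 x)) (f ∘ g) = f x := by
  have : (comap g (𝓝 x)).NeBot := comap_neBot_iff_frequently.2 (mem_closure_iff_frequently.1 hxg)
  exact ((hf x hx).tendsto.comp
    (tendsto_nhdsWithin_iff.2 ⟨tendsto_comap, .of_forall hg⟩)).limUnder_eq

theorem tendsto_euclideanSpace_of_forall_apply {α ι : Type*} [Fintype ι] {l : Filter α}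
    {f : α → EuclideanSpace ℝ ι} {v : EuclideanSpace ℝ ι}
    (h : ∀ i, Tendsto (fun a => f a i) l (𝓝 (v i))) : Tendsto f l (𝓝 v) := by
  simpa [Function.comp_def] using ((PiLp.continuous_toLp 2 _).tendsto _).comp (tendsto_pi_nhds.2 h)

theorem tendsto_of_liminf_eq_of_liminf_neg_eq {x : ℕ → ℝ} {a M : ℝ} (hM : ∀ n, |x n| ≤ M)
    (h : liminf x atTop = a) (h_neg : liminf (fun n => -x n) atTop = -a) :
    Tendsto x atTop (𝓝 a) := by
  have hbdd : IsBoundedUnder (· ≥ ·) atTop x :=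
    isBoundedUnder_of ⟨-M, fun n => (neg_le_of_abs_le (hM n))⟩
  have hbdd_neg : IsBoundedUnder (· ≥ ·) atTop fun n => -x n :=
    isBoundedUnder_of ⟨-M, fun n => neg_le_neg (le_of_abs_le (hM n))⟩
  refine tendsto_order.2 ⟨fun c hc => eventually_lt_of_lt_liminf (h ▸ hc) hbdd, fun c hc => ?_⟩
  exact (eventually_lt_of_lt_liminf (h_neg ▸ neg_lt_neg hc) hbdd_neg).mono fun n hn =>
    neg_lt_neg_iff.1 hn

theorem tendsto_iSup_sq_norm_sub_of_tendstoUniformly {ι X E : Type*} [SeminormedAddCommGroup E]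
    {F : ι → X → E} {f : X → E} {l : Filter ι} (h : TendstoUniformly F f l) :
    Tendsto (fun i => ⨆ x, ‖F i x - f x‖ ^ 2) l (𝓝 0) := by
  refine Metric.tendsto_nhds.2 fun ε hε => ?_
  filter_upwards [Metric.tendstoUniformly_iff.1 h (min 1 (ε / 2)) (by positivity)] with i hi
  have hsq (x : X) : ‖F i x - f x‖ ^ 2 ≤ ε / 2 := by
    have h₁ : ‖F i x - f x‖ < min 1 (ε / 2) := by rw [← dist_eq_norm, dist_comm]; exact hi x
    have h₂ := h₁.trans_le (min_le_left _ _)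
    nlinarith [norm_nonneg (F i x - f x), min_le_right 1 (ε / 2)]
  rw [Real.dist_eq, sub_zero, abs_of_nonneg (Real.iSup_nonneg fun _ => by positivity)]
  exact (Real.iSup_le hsq (by positivity)).trans_lt (by linarith)

theorem aemeasurable_iSup_Icc {Ω : Type*} [MeasurableSpace Ω] {P : Measure Ω} {T : ℝ}
    {Z : ℝ → Ω → ℝ} (hZ : ∀ t, Measurable (Z t))
    (hZ_cont : ∀ᵐ ω ∂P, ContinuousOn (Z · ω) (Icc 0 T)) :
    AEMeasurable (fun ω => ⨆ t : Icc (0:ℝ) T, Z t ω) P := by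
  obtain ⟨D, hD_count, hD⟩ := TopologicalSpace.exists_countable_dense (Icc (0:ℝ) T)
  have : Countable D := hD_count.to_subtype
  refine ⟨fun ω => ⨆ t : D, Z t ω, .iSup fun t => hZ _, ?_⟩
  filter_upwards [hZ_cont] with ω hω
  exact (hD.ciSup' hω.domRestrict).symm

def IsIntegralSolution {E : Type*} [NormedAddCommGroup E] [NormedSpace ℝ E] (T : ℝ)
    (b : ℝ → E → E) (β : ℝ → E) (x : E) (f : ℝ → E) : Prop :=
  ContinuousOn f (Icc 0 T) ∧ ∀ t ∈ Icc (0:ℝ) T, f t = x + (∫ s in Ioc (0:ℝ) t, b s (f s)) + β t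


section IntegralEquation

variable {E : Type*} [NormedAddCommGroup E] {T C : ℝ} {b : ℝ → E → E}

theorem continuousOn_comp_graph (hb_cont : ContinuousOn (Function.uncurry b) (Icc 0 T ×ˢ univ))
    {g : ℝ → E} (hg : ContinuousOn g (Icc 0 T)) : ContinuousOn (fun u => b u (g u)) (Icc 0 T) :=
  hb_cont.comp (continuousOn_id.prodMk hg) fun _ hu => ⟨hu, trivial⟩

theorem intervalIntegrable_comp (hb_cont : ContinuousOn (Function.uncurry b) (Icc 0 T ×ˢ univ))
    {g : ℝ → E} (hg : ContinuousOn g (Icc 0 T)) {s t : ℝ} (hs : s ∈ Icc 0 T) (ht : t ∈ Icc 0 T) :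
    IntervalIntegrable (fun u => b u (g u)) volume s t :=
  ((continuousOn_comp_graph hb_cont hg).mono (uIcc_subset_Icc hs ht)).intervalIntegrable

variable [NormedSpace ℝ E] {β : ℝ → E}

theorem norm_integral_comp_le (hb_bdd : ∀ t ∈ Icc (0:ℝ) T, ∀ y, ‖b t y‖ ≤ C) (g : ℝ → E)
    {s t : ℝ} (hs : s ∈ Icc 0 T) (ht : t ∈ Icc 0 T) :
    ‖∫ u in s..t, b u (g u)‖ ≤ C * |t - s| :=
  intervalIntegral.norm_integral_le_of_norm_le_const fun u hu =>
    hb_bdd u (uIoc_subset_uIcc.trans (uIcc_subset_Icc hs ht) hu) _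

theorem norm_integral_zero_comp_le (hb_bdd : ∀ t ∈ Icc (0:ℝ) T, ∀ y, ‖b t y‖ ≤ C) (g : ℝ → E)
    {t : ℝ} (ht : t ∈ Icc 0 T) : ‖∫ s in (0:ℝ)..t, b s (g s)‖ ≤ C * T := by
  have h0 : (0:ℝ) ∈ Icc 0 T := ⟨le_rfl, ht.1.trans ht.2⟩
  have hC : 0 ≤ C := (norm_nonneg _).trans (hb_bdd 0 h0 (g 0))
  calc _ ≤ C * |t - 0| := norm_integral_comp_le hb_bdd g h0 ht
    _ ≤ C * T := by rw [sub_zero, abs_of_nonneg ht.1]; gcongr; exact ht.2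

namespace IsIntegralSolution

variable {x y : E} {f g : ℝ → E}

theorem eq_intervalIntegral (hf : IsIntegralSolution T b β x f) {t : ℝ} (ht : t ∈ Icc 0 T) :
    f t = x + (∫ s in (0:ℝ)..t, b s (f s)) + β t := by
  rw [intervalIntegral.integral_of_le ht.1]
  exact hf.2 t ht

theorem sub_eq (hb_cont : ContinuousOn (Function.uncurry b) (Icc 0 T ×ˢ univ))
    (hf : IsIntegralSolution T b β x f) {s t : ℝ} (hs : s ∈ Icc 0 T) (ht : t ∈ Icc 0 T) :
    f t - f s = (∫ u in s..t, b u (f u)) + (β t - β s) := by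
  have h0 : (0:ℝ) ∈ Icc 0 T := ⟨le_rfl, hs.1.trans hs.2⟩
  rw [hf.eq_intervalIntegral ht, hf.eq_intervalIntegral hs,
    ← intervalIntegral.integral_interval_sub_left (intervalIntegrable_comp hb_cont hf.1 h0 ht)
      (intervalIntegrable_comp hb_cont hf.1 h0 hs)]
  abel

theorem dist_le (hb_cont : ContinuousOn (Function.uncurry b) (Icc 0 T ×ˢ univ))
    (hb_bdd : ∀ t ∈ Icc (0:ℝ) T, ∀ y, ‖b t y‖ ≤ C)
    (hf : IsIntegralSolution T b β x f) {s t : ℝ} (hs : s ∈ Icc 0 T) (ht : t ∈ Icc 0 T) :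
    dist (f s) (f t) ≤ C * dist s t + dist (β s) (β t) := by
  rw [dist_comm (f s), dist_eq_norm, hf.sub_eq hb_cont hs ht, dist_comm s, Real.dist_eq,
    dist_comm (β s), dist_eq_norm]
  exact (norm_add_le _ _).trans (by gcongr; exact norm_integral_comp_le hb_bdd f hs ht)

theorem norm_le (hb_bdd : ∀ t ∈ Icc (0:ℝ) T, ∀ y, ‖b t y‖ ≤ C)
    (hf : IsIntegralSolution T b β x f) {t : ℝ} (ht : t ∈ Icc 0 T) :
    ‖f t‖ ≤ ‖x‖ + C * T + ‖β t‖ := by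
  rw [hf.eq_intervalIntegral ht]
  exact norm_add₃_le.trans (by gcongr; exact norm_integral_zero_comp_le hb_bdd f ht)

theorem norm_sub_le (hb_bdd : ∀ t ∈ Icc (0:ℝ) T, ∀ y, ‖b t y‖ ≤ C)
    (hf : IsIntegralSolution T b β x f) (hg : IsIntegralSolution T b β y g) {t : ℝ}
    (ht : t ∈ Icc 0 T) : ‖f t - g t‖ ≤ ‖x - y‖ + 2 * C * T := by
  rw [hf.eq_intervalIntegral ht, hg.eq_intervalIntegral ht]
  calc _ = ‖(x - y) + ((∫ s in (0:ℝ)..t, b s (f s)) - ∫ s in (0:ℝ)..t, b s (g s))‖ := by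
        congr 1; abel
    _ ≤ ‖x - y‖ + (‖∫ s in (0:ℝ)..t, b s (f s)‖ + ‖∫ s in (0:ℝ)..t, b s (g s)‖) :=
        (norm_add_le _ _).trans (by gcongr; exact _root_.norm_sub_le _ _)
    _ ≤ ‖x - y‖ + 2 * C * T := by
        linarith [norm_integral_zero_comp_le hb_bdd f ht, norm_integral_zero_comp_le hb_bdd g ht]

theorem of_tendsto (hb_cont : ContinuousOn (Function.uncurry b) (Icc 0 T ×ˢ univ))
    (hb_bdd : ∀ t ∈ Icc (0:ℝ) T, ∀ y, ‖b t y‖ ≤ C) {xs : ℕ → E}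
    (hxs : Tendsto xs atTop (𝓝 x)) {fs : ℕ → ℝ → E}
    (hfs : ∀ n, IsIntegralSolution T b β (xs n) (fs n)) (hf : ContinuousOn f (Icc 0 T))
    (hlim : ∀ t ∈ Icc (0:ℝ) T, Tendsto (fun n => fs n t) atTop (𝓝 (f t))) :
    IsIntegralSolution T b β x f := by
  refine ⟨hf, fun t ht => tendsto_nhds_unique (hlim t ht) ?_⟩
  refine ((hxs.add ?_).add tendsto_const_nhds).congr fun n => ((hfs n).2 t ht).symm
  have hsub : Ioc 0 t ⊆ Icc 0 T := fun s hs => ⟨hs.1.le, hs.2.trans ht.2⟩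
  refine tendsto_integral_of_dominated_convergence (fun _ => C)
    (fun n => ((continuousOn_comp_graph hb_cont (hfs n).1).mono hsub).aestronglyMeasurable
      measurableSet_Ioc)
    (integrableOn_const measure_Ioc_lt_top.ne)
    (fun n => ae_restrict_of_forall_mem measurableSet_Ioc fun s hs => hb_bdd s (hsub hs) _)
    (ae_restrict_of_forall_mem measurableSet_Ioc fun s hs => ?_)
  exact (hb_cont (s, f s) ⟨hsub hs, trivial⟩).tendsto.comp <| tendsto_nhdsWithin_iff.2
    ⟨tendsto_const_nhds.prodMk_nhds (hlim s (hsub hs)), .of_forall fun _ => ⟨hsub hs, trivial⟩⟩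

theorem congr (hf : IsIntegralSolution T b β x f) (hfg : EqOn f g (Icc 0 T)) :
    IsIntegralSolution T b β x g := by
  refine ⟨hf.1.congr hfg.symm, fun t ht => ?_⟩
  rw [← hfg ht, hf.2 t ht, setIntegral_congr_fun measurableSet_Ioc fun s hs =>
    congrArg (b s) (hfg ⟨hs.1.le, hs.2.trans ht.2⟩)]

theorem iSup_sq_norm_sub_le (hb_bdd : ∀ t ∈ Icc (0:ℝ) T, ∀ y, ‖b t y‖ ≤ C)
    (hf : IsIntegralSolution T b β x f) (hg : IsIntegralSolution T b β y g) :
    ⨆ t : Icc (0:ℝ) T, ‖f t - g t‖ ^ 2 ≤ (‖x - y‖ + 2 * C * T) ^ 2 :=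
  Real.iSup_le (fun t => pow_le_pow_left₀ (norm_nonneg _) (hf.norm_sub_le hb_bdd hg t.2) 2)
    (sq_nonneg _)

end IsIntegralSolution

theorem exists_norm_le_of_isIntegralSolution (hb_bdd : ∀ t ∈ Icc (0:ℝ) T, ∀ y, ‖b t y‖ ≤ C)
    {xs : ℕ → E} {x : E} (hxs : Tendsto xs atTop (𝓝 x)) {fs : ℕ → ℝ → E}
    (hfs : ∀ n, IsIntegralSolution T b β (xs n) (fs n)) {t : ℝ} (ht : t ∈ Icc 0 T) :
    ∃ K, ∀ n, ‖fs n t‖ ≤ K := by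
  obtain ⟨M, hM⟩ := hxs.norm.bddAbove_range
  exact ⟨M + C * T + ‖β t‖, fun n =>
    ((hfs n).norm_le hb_bdd ht).trans (by gcongr; exact hM ⟨n, rfl⟩)⟩

theorem equicontinuous_restrict_of_isIntegralSolution
    (hb_cont : ContinuousOn (Function.uncurry b) (Icc 0 T ×ˢ univ))
    (hb_bdd : ∀ t ∈ Icc (0:ℝ) T, ∀ y, ‖b t y‖ ≤ C) (hβ : ContinuousOn β (Icc 0 T))
    {ι : Type*} {xs : ι → E} {fs : ι → ℝ → E} (hfs : ∀ i, IsIntegralSolution T b β (xs i) (fs i)) :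
    Equicontinuous fun i (t : Icc (0:ℝ) T) => fs i t := by
  intro t₀
  have hmod : Continuous fun t : Icc (0:ℝ) T => C * dist (t₀ : ℝ) t + dist (β t₀) (β t) :=
    (continuous_const.mul (continuous_const.dist continuous_subtype_val)).add
      (continuous_const.dist hβ.domRestrict)
  refine Metric.equicontinuousAt_of_continuity_modulus _ (by simpa using hmod.tendsto t₀) _
    (.of_forall fun t i => (hfs i).dist_le hb_cont hb_bdd t₀.2 t.2)

theorem exists_isIntegralSolution_of_tendsto_denseRange [CompleteSpace E]
    (hb_cont : ContinuousOn (Function.uncurry b) (Icc 0 T ×ˢ univ))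
    (hb_bdd : ∀ t ∈ Icc (0:ℝ) T, ∀ y, ‖b t y‖ ≤ C) (hβ : ContinuousOn β (Icc 0 T))
    {xs : ℕ → E} {x : E} (hxs : Tendsto xs atTop (𝓝 x)) {fs : ℕ → ℝ → E}
    (hfs : ∀ n, IsIntegralSolution T b β (xs n) (fs n)) {tm : ℕ → Icc (0:ℝ) T}
    (htm : DenseRange tm) {z : ℕ → E} (hz : ∀ m, Tendsto (fun n => fs n (tm m)) atTop (𝓝 (z m))) :
    ∃ f, IsIntegralSolution T b β x f ∧
      ∀ t ∈ Icc (0:ℝ) T, Tendsto (fun n => fs n t) atTop (𝓝 (f t)) := by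
  have hF := equicontinuous_restrict_of_isIntegralSolution hb_cont hb_bdd hβ hfs
  have hcauchy := hF.cauchySeq_of_dense htm (forall_mem_range.2 fun m => (hz m).cauchySeq)
  set f : ℝ → E := fun t => limUnder atTop fun n => fs n t
  have hlim (t : ℝ) (ht : t ∈ Icc 0 T) : Tendsto (fun n => fs n t) atTop (𝓝 (f t)) :=
    (hcauchy ⟨t, ht⟩).tendsto_limUnder
  have hf : ContinuousOn f (Icc 0 T) := continuousOn_iff_continuous_domRestrict.2 <|
    (tendsto_pi_nhds.2 fun t : Icc (0:ℝ) T => hlim t t.2).continuous_of_equicontinuous hF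
  exact ⟨f, .of_tendsto hb_cont hb_bdd hxs hfs hf hlim, hlim⟩

theorem isIntegralSolution_limUnder_comap_of_tendsto_denseRange [CompleteSpace E]
    (hb_cont : ContinuousOn (Function.uncurry b) (Icc 0 T ×ˢ univ))
    (hb_bdd : ∀ t ∈ Icc (0:ℝ) T, ∀ y, ‖b t y‖ ≤ C) (hβ : ContinuousOn β (Icc 0 T))
    {xs : ℕ → E} {x : E} (hxs : Tendsto xs atTop (𝓝 x)) {fs : ℕ → ℝ → E}
    (hfs : ∀ n, IsIntegralSolution T b β (xs n) (fs n)) {tm : ℕ → Icc (0:ℝ) T}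
    (htm : DenseRange tm) {z : ℕ → E} (hz : ∀ m, Tendsto (fun n => fs n (tm m)) atTop (𝓝 (z m))) :
    IsIntegralSolution T b β x (fun t => limUnder (comap (fun m => (tm m : ℝ)) (𝓝 t)) z) ∧
      ∀ t ∈ Icc (0:ℝ) T, Tendsto (fun n => fs n t) atTop
        (𝓝 (limUnder (comap (fun m => (tm m : ℝ)) (𝓝 t)) z)) := by
  obtain ⟨f, hf, hf_lim⟩ :=
    exists_isIntegralSolution_of_tendsto_denseRange hb_cont hb_bdd hβ hxs hfs htm hz
  have hzf : z = f ∘ fun m => (tm m : ℝ) :=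
    funext fun m => tendsto_nhds_unique (hz m) (hf_lim _ (tm m).2)
  have hdense : Icc 0 T ⊆ closure (range fun m => (tm m : ℝ)) := fun t ht => by
    rw [range_comp' Subtype.val tm]
    exact image_closure_subset_closure_image continuous_subtype_val ⟨⟨t, ht⟩, htm _, rfl⟩
  have hfL : EqOn f (fun t => limUnder (comap (fun m => (tm m : ℝ)) (𝓝 t)) z) (Icc 0 T) :=
    fun t ht => by
      rw [hzf]
      exact (hf.1.limUnder_comap_comp (fun m => (tm m).2) ht (hdense ht)).symm
  exact ⟨hf.congr hfL, fun t ht => by simpa only [hfL ht] using hf_lim t ht⟩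

end IntegralEquation

section SDE

variable {Ω : Type} [MeasurableSpace Ω] {P : Measure Ω} {d : ℕ} {T C : ℝ}
  {b : ℝ → EuclideanSpace ℝ (Fin d) → EuclideanSpace ℝ (Fin d)}
  {B : ℝ → Ω → EuclideanSpace ℝ (Fin d)}

theorem solvesSDE_iff {x : EuclideanSpace ℝ (Fin d)} {X : ℝ → Ω → EuclideanSpace ℝ (Fin d)} :
    SolvesSDE P d T b B x X ↔
      (∀ t, Measurable (X t)) ∧ ∀ᵐ ω ∂P, IsIntegralSolution T b (B · ω) x (X · ω) := by
  simp only [SolvesSDE, IsIntegralSolution, eventually_and]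

theorem exists_solvesSDE_apply_eq_liminf
    (hb_cont : ContinuousOn (Function.uncurry b) (Icc 0 T ×ˢ univ))
    (hb_bdd : ∀ t ∈ Icc (0:ℝ) T, ∀ y, ‖b t y‖ ≤ C)
    (hB : ∀ᵐ ω ∂P, ContinuousOn (B · ω) (Icc 0 T))
    {u : ℕ → EuclideanSpace ℝ (Fin d)} {x₀ : EuclideanSpace ℝ (Fin d)}
    (hu : Tendsto u atTop (𝓝 x₀)) {X : ℕ → ℝ → Ω → EuclideanSpace ℝ (Fin d)}
    (hX : ∀ n, SolvesSDE P d T b B (u n) (X n)) {tm : ℕ → Icc (0:ℝ) T} (htm : DenseRange tm)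
    (ℓ : StrongDual ℝ (EuclideanSpace ℝ (Fin d))) {t₀ : ℝ} (ht₀ : t₀ ∈ Icc 0 T) :
    ∃ Y, SolvesSDE P d T b B x₀ Y ∧
      ∀ᵐ ω ∂P, ℓ (Y t₀ ω) = liminf (fun n => ℓ (X n t₀ ω)) atTop := by
  -- observed: `ℓ` at time `t₀` (index `none`) and every coordinate at the times `tm m`
  let a : Ω → ℕ → Option (ℕ × Fin d) → ℝ := fun ω n o =>
    o.elim (ℓ (X n t₀ ω)) fun p => X n (tm p.1) ω p.2
  have ha (n : ℕ) : ∀ o, Measurable fun ω => a ω n o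
    | none => ℓ.continuous.measurable.comp ((hX n).1 t₀)
    | some (m, i) => (EuclideanSpace.proj i).continuous.measurable.comp ((hX n).1 _)
  obtain ⟨r, hr_meas, hr_head, hr_lim⟩ := exists_measurable_subseq_tendsto a ha none
  let z : Ω → ℕ → EuclideanSpace ℝ (Fin d) := fun ω m => WithLp.toLp 2 fun i => r ω (some (m, i))
  let Y : ℝ → Ω → EuclideanSpace ℝ (Fin d) := fun t ω =>
    limUnder (comap (fun m => (tm m : ℝ)) (𝓝 t)) (z ω)
  have hY_meas (t : ℝ) : Measurable (Y t) :=
    (StronglyMeasurable.limUnder fun m => ((PiLp.continuous_toLp 2 _).measurable.comp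
      (measurable_pi_lambda _ fun i => hr_meas _)).stronglyMeasurable).measurable
  have key : ∀ᵐ ω ∂P, IsIntegralSolution T b (B · ω) x₀ (Y · ω) ∧
      ℓ (Y t₀ ω) = liminf (fun n => ℓ (X n t₀ ω)) atTop := by
    filter_upwards [hB, ae_all_iff.2 fun n => (solvesSDE_iff.1 (hX n)).2] with ω hBω hXω
    have hbdd : ∀ o, ∃ K, ∀ n, |a ω n o| ≤ K
      | none =>
        have ⟨K, hK⟩ := exists_norm_le_of_isIntegralSolution hb_bdd hu hXω ht₀
        ⟨‖ℓ‖ * K, fun n => (ℓ.le_opNorm _).trans (by gcongr; exact hK n)⟩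
      | some (m, i) =>
        have ⟨K, hK⟩ := exists_norm_le_of_isIntegralSolution hb_bdd hu hXω (tm m).2
        ⟨K, fun n => (PiLp.norm_apply_le _ i).trans (hK n)⟩
    obtain ⟨φ, hφ, hφ_lim⟩ := hr_lim ω hbdd
    have hz (m : ℕ) : Tendsto (fun k => X (φ k) (tm m) ω) atTop (𝓝 (z ω m)) :=
      tendsto_euclideanSpace_of_forall_apply fun i => hφ_lim (some (m, i))
    obtain ⟨hY, hY_lim⟩ := isIntegralSolution_limUnder_comap_of_tendsto_denseRange hb_cont hb_bdd
      hBω (hu.comp hφ.tendsto_atTop) (fun k => hXω (φ k)) htm hz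
    refine ⟨hY, ?_⟩
    rw [show liminf (fun n => ℓ (X n t₀ ω)) atTop = r ω none from (hr_head ω).symm]
    exact tendsto_nhds_unique ((ℓ.continuous.tendsto _).comp (hY_lim t₀ ht₀)) (hφ_lim none)
  exact ⟨Y, solvesSDE_iff.2 ⟨hY_meas, key.mono fun _ h => h.1⟩, key.mono fun _ h => h.2⟩

theorem ae_tendsto_of_pathwiseUniqueness [IsProbabilityMeasure P] {H : ℝ}
    (hb_cont : ContinuousOn (Function.uncurry b) (Icc 0 T ×ˢ univ))
    (hb_bdd : ∀ t ∈ Icc (0:ℝ) T, ∀ y, ‖b t y‖ ≤ C) (hB : IsFBM P d H T B)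
    (hPU : PathwiseUniqueness d H T b) {u : ℕ → EuclideanSpace ℝ (Fin d)}
    {x₀ : EuclideanSpace ℝ (Fin d)} (hu : Tendsto u atTop (𝓝 x₀))
    {X : ℕ → ℝ → Ω → EuclideanSpace ℝ (Fin d)} (hX : ∀ n, SolvesSDE P d T b B (u n) (X n))
    {X₀ : ℝ → Ω → EuclideanSpace ℝ (Fin d)} (hX₀ : SolvesSDE P d T b B x₀ X₀)
    {tm : ℕ → Icc (0:ℝ) T} (htm : DenseRange tm) {t₀ : ℝ} (ht₀ : t₀ ∈ Icc 0 T) :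
    ∀ᵐ ω ∂P, Tendsto (fun n => X n t₀ ω) atTop (𝓝 (X₀ t₀ ω)) := by
  have hliminf (ℓ : StrongDual ℝ (EuclideanSpace ℝ (Fin d))) :
      ∀ᵐ ω ∂P, liminf (fun n => ℓ (X n t₀ ω)) atTop = ℓ (X₀ t₀ ω) := by
    obtain ⟨Y, hY, hYℓ⟩ := exists_solvesSDE_apply_eq_liminf hb_cont hb_bdd hB.2.1 hu hX htm ℓ ht₀
    filter_upwards [hPU Ω _ P inferInstance B hB x₀ X₀ Y hX₀ hY, hYℓ] with ω hX₀Y hℓ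
    rw [hX₀Y t₀ ht₀, hℓ]
  filter_upwards [ae_all_iff.2 fun i => hliminf (EuclideanSpace.proj i),
    ae_all_iff.2 fun i => hliminf (-EuclideanSpace.proj i),
    ae_all_iff.2 fun n => (solvesSDE_iff.1 (hX n)).2] with ω h h_neg hXω
  obtain ⟨K, hK⟩ := exists_norm_le_of_isIntegralSolution hb_bdd hu hXω ht₀
  exact tendsto_euclideanSpace_of_forall_apply fun i =>
    tendsto_of_liminf_eq_of_liminf_neg_eq (fun n => (PiLp.norm_apply_le _ i).trans (hK n))
      (h i) (h_neg i)

end SDE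

theorem continuity_in_initial_condition_continuous_drift_general
    {Ω : Type} [MeasurableSpace Ω] (P : Measure Ω) [IsProbabilityMeasure P]
    (d : ℕ) (H T : ℝ) (hT : 0 < T)
    (b : ℝ → EuclideanSpace ℝ (Fin d) → EuclideanSpace ℝ (Fin d))
    (hb_cont : ContinuousOn (Function.uncurry b)
      (Set.Icc (0:ℝ) T ×ˢ (Set.univ : Set (EuclideanSpace ℝ (Fin d)))))
    (C : ℝ) (hb_bdd : ∀ t ∈ Set.Icc (0:ℝ) T, ∀ y, ‖b t y‖ ≤ C)
    (B : ℝ → Ω → EuclideanSpace ℝ (Fin d)) (hB : IsFBM P d H T B)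
    (X : EuclideanSpace ℝ (Fin d) → ℝ → Ω → EuclideanSpace ℝ (Fin d))
    (hX : ∀ x, StrongSolution P d T b B x (X x))
    (hPU : PathwiseUniqueness d H T b)
    (x₀ : EuclideanSpace ℝ (Fin d)) :
    Filter.Tendsto
      (fun x => ∫ ω, (⨆ t : Set.Icc (0:ℝ) T, ‖X x (t : ℝ) ω - X x₀ (t : ℝ) ω‖ ^ 2) ∂P)
      (nhds x₀) (nhds 0) := by
  refine tendsto_iff_seq_tendsto.2 fun u hu => ?_
  have : Nonempty (Icc (0:ℝ) T) := ⟨⟨0, le_rfl, hT.le⟩⟩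
  obtain ⟨tm, htm⟩ := TopologicalSpace.exists_dense_seq (Icc (0:ℝ) T)
  obtain ⟨R, hR⟩ := (hu.sub_const x₀).norm.bddAbove_range
  have hC : 0 ≤ C := (norm_nonneg _).trans (hb_bdd 0 ⟨le_rfl, hT.le⟩ 0)
  have hsol := ae_all_iff.2 fun n => (solvesSDE_iff.1 (hX (u n)).1).2
  have hsol₀ := (solvesSDE_iff.1 (hX x₀).1).2
  set S : ℕ → Ω → ℝ := fun n ω => ⨆ t : Icc (0:ℝ) T, ‖X (u n) t ω - X x₀ t ω‖ ^ 2
  have hS_meas (n : ℕ) : AEStronglyMeasurable (S n) P :=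
    (aemeasurable_iSup_Icc (fun t => (((hX (u n)).1.1 t).sub ((hX x₀).1.1 t)).norm.pow_const 2)
      (by filter_upwards [hsol, hsol₀] with ω h h₀ using (((h n).1.sub h₀.1).norm).pow 2)
      ).aestronglyMeasurable
  have hS_bdd (n : ℕ) : ∀ᵐ ω ∂P, ‖S n ω‖ ≤ (R + 2 * C * T) ^ 2 := by
    filter_upwards [hsol, hsol₀] with ω h h₀
    rw [Real.norm_of_nonneg (Real.iSup_nonneg fun _ => sq_nonneg _)]
    refine ((h n).iSup_sq_norm_sub_le hb_bdd h₀).trans ?_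
    gcongr
    exact hR ⟨n, rfl⟩
  have hconv : ∀ᵐ ω ∂P, ∀ m, Tendsto (fun n => X (u n) (tm m) ω) atTop (𝓝 (X x₀ (tm m) ω)) :=
    ae_all_iff.2 fun m => ae_tendsto_of_pathwiseUniqueness hb_cont hb_bdd hB hPU hu
      (fun n => (hX (u n)).1) (hX x₀).1 htm (tm m).2
  have hS_lim : ∀ᵐ ω ∂P, Tendsto (fun n => S n ω) atTop (𝓝 0) := by
    filter_upwards [hconv, hB.2.1, hsol, hsol₀] with ω hω hBω h h₀
    exact tendsto_iSup_sq_norm_sub_of_tendstoUniformly <|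
      (equicontinuous_restrict_of_isIntegralSolution hb_cont hb_bdd hBω h).tendstoUniformly_of_dense
        h₀.1.domRestrict htm (forall_mem_range.2 hω)
  have := tendsto_integral_of_dominated_convergence _ hS_meas (integrable_const _) hS_bdd hS_lim
  rw [integral_zero] at this
  exact this

/-- if `b` is continuous, bounded and measurable and pathwise uniqueness
holds for the SDE `dX_t = b(t,X_t) dt + dB^H_t`, then the strong solutions depend
continuously on the initial condition:
`E[sup_{0 ≤ t ≤ T} |X_t(x) - X_t(x₀)|²] → 0` as `x → x₀`. -/
theorem continuity_in_initial_condition_continuous_drift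
    {Ω : Type} [MeasurableSpace Ω] (P : Measure Ω) [IsProbabilityMeasure P]
    (d : ℕ) (hd : 1 ≤ d) (H T : ℝ) (hH0 : 0 < H) (hH : H < 1/2) (hT : 0 < T)
    (b : ℝ → EuclideanSpace ℝ (Fin d) → EuclideanSpace ℝ (Fin d))
    (hb_meas : Measurable (Function.uncurry b))
    (hb_cont : ContinuousOn (Function.uncurry b)
      (Set.Icc (0:ℝ) T ×ˢ (Set.univ : Set (EuclideanSpace ℝ (Fin d)))))
    (C : ℝ) (hb_bdd : ∀ t ∈ Set.Icc (0:ℝ) T, ∀ y, ‖b t y‖ ≤ C)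
    (B : ℝ → Ω → EuclideanSpace ℝ (Fin d)) (hB : IsFBM P d H T B)
    (X : EuclideanSpace ℝ (Fin d) → ℝ → Ω → EuclideanSpace ℝ (Fin d))
    (hX : ∀ x, StrongSolution P d T b B x (X x))
    (hPU : PathwiseUniqueness d H T b)
    (x₀ : EuclideanSpace ℝ (Fin d)) :
    Filter.Tendsto
      (fun x => ∫ ω, (⨆ t : Set.Icc (0:ℝ) T, ‖X x (t : ℝ) ω - X x₀ (t : ℝ) ω‖ ^ 2) ∂P)
      (nhds x₀) (nhds 0) :=
  continuity_in_initial_condition_continuous_drift_general P d H T hT b hb_cont C hb_bdd B hB X hX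
    hPU x₀

end
end

section
/- Let 0 < H < 1/2, T > 0, let b : [0,T] × ℝ^d → ℝ^d be a bounded measurable function with sup norm ‖b‖_∞, let X be a measurable d-dimensional process, and define v_s = (1/Γ(1/2 − H)) s^{H − 1/2} ∫_0^s (s − r)^{−1/2 − H} r^{1/2 − H} b(r, X_r) dr for s ∈ (0,T]. Then E[ exp( (1/2) ∫_0^T |v_s|² ds ) ] ≤ exp( (1/2) C_H T^{2(1−H)} ‖b‖_∞² ) < ∞, where C_H = Γ(3/2 − H)² / Γ(2 − 2H)². -/
open MeasureTheory ProbabilityTheory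

noncomputable section


lemma beta_Ioc_integrable {α s : ℝ} (hα : 0 < α) (hs : 0 < s) :
    IntegrableOn (fun r => (s - r) ^ (α - 1) * r ^ α) (Set.Ioc 0 s) volume := by
  have hmeas : Measurable (fun r : ℝ => (s - r) ^ (α - 1) * r ^ α) :=
    by fun_prop
  have hg : IntegrableOn (fun r : ℝ => s ^ α * (s - r) ^ (α - 1)) (Set.Ioc 0 s) volume := by
    have h1 : IntervalIntegrable (fun x : ℝ => x ^ (α - 1)) volume 0 s :=
      intervalIntegral.intervalIntegrable_rpow' (by linarith)
    have h2 := (h1.comp_sub_left s).symm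
    simp only [sub_zero, sub_self] at h2
    rw [intervalIntegrable_iff_integrableOn_Ioc_of_le hs.le] at h2
    exact h2.const_mul _
  refine hg.mono' hmeas.aestronglyMeasurable ?_
  filter_upwards [ae_restrict_mem measurableSet_Ioc] with r hr
  have h0 : (0:ℝ) ≤ (s - r) ^ (α - 1) := Real.rpow_nonneg (by linarith [hr.2]) _
  have h0' : (0:ℝ) ≤ r ^ α := Real.rpow_nonneg hr.1.le _
  rw [Real.norm_eq_abs, abs_of_nonneg (mul_nonneg h0 h0'), mul_comm (s ^ α)]
  exact mul_le_mul_of_nonneg_left (Real.rpow_le_rpow hr.1.le hr.2 hα.le) h0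

lemma beta_Ioc_value {α s : ℝ} (hα : 0 < α) (hs : 0 < s) :
    ∫ r in Set.Ioc (0:ℝ) s, (s - r) ^ (α - 1) * r ^ α =
      s ^ (2*α) * (Real.Gamma (α+1) * Real.Gamma α / Real.Gamma (2*α+1)) := by
  have key := Complex.betaIntegral_scaled ((α:ℂ)+1) (α:ℂ) hs
  have hB : Complex.betaIntegral ((α:ℂ)+1) (α:ℂ) =
      ((Real.Gamma (α+1) * Real.Gamma α / Real.Gamma (2*α+1) : ℝ) : ℂ) := by
    have hG := Complex.Gamma_mul_Gamma_eq_betaIntegral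
      (s := (α:ℂ)+1) (t := (α:ℂ)) (by simp; linarith) (by simpa using hα)
    have e1 : ((α:ℂ)+1) + (α:ℂ) = ((2*α+1 : ℝ) : ℂ) := by push_cast; ring
    have e2 : ((α:ℂ)+1) = ((α+1:ℝ):ℂ) := by push_cast; ring
    rw [e1, e2, Complex.Gamma_ofReal, Complex.Gamma_ofReal, Complex.Gamma_ofReal] at hG
    have hΓne : (Real.Gamma (2*α+1) : ℂ) ≠ 0 := by
      simp only [ne_eq, Complex.ofReal_eq_zero]
      exact (Real.Gamma_pos_of_pos (by linarith)).ne'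
    rw [e2, Complex.ofReal_div, Complex.ofReal_mul, eq_div_iff hΓne]
    linear_combination -hG
  have hlhs : (∫ x in (0:ℝ)..s, (x:ℂ) ^ ((α:ℂ)+1-1) * ((s:ℂ) - x) ^ ((α:ℂ)-1)) =
      ((∫ r in Set.Ioc (0:ℝ) s, (s - r) ^ (α - 1) * r ^ α : ℝ) : ℂ) := by
    rw [intervalIntegral.integral_of_le hs.le]
    have h : ∫ x in Set.Ioc (0:ℝ) s, (x:ℂ) ^ ((α:ℂ)+1-1) * ((s:ℂ) - x) ^ ((α:ℂ)-1) =
        ∫ x in Set.Ioc (0:ℝ) s, (((s - x) ^ (α - 1) * x ^ α : ℝ) : ℂ) := by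
      refine setIntegral_congr_fun measurableSet_Ioc fun x hx => ?_
      have hx0 : (0:ℝ) ≤ x := hx.1.le
      have hsx : (0:ℝ) ≤ s - x := by linarith [hx.2]
      rw [show (α:ℂ)+1-1 = ((α:ℝ):ℂ) by push_cast; ring,
        show (α:ℂ)-1 = ((α-1:ℝ):ℂ) by push_cast; ring,
        show (s:ℂ)-(x:ℂ) = ((s-x:ℝ):ℂ) by push_cast; ring,
        ← Complex.ofReal_cpow hx0, ← Complex.ofReal_cpow hsx]
      push_cast
      ring
    rw [h]
    exact integral_ofReal
  have hrhs : ((s:ℂ) ^ ((α:ℂ)+1+(α:ℂ)-1)) = ((s ^ (2*α) : ℝ) : ℂ) := by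
    have e3 : (α:ℂ)+1+(α:ℂ)-1 = ((2*α : ℝ) : ℂ) := by push_cast; ring
    rw [e3, ← Complex.ofReal_cpow hs.le]
  rw [hlhs, hB, hrhs] at key
  exact_mod_cast key

/-- for `0 < H < 1/2`, `b` bounded measurable with sup norm `C` on `[0,T]`,
`X` a measurable process, and
`v_s = (1/Γ(1/2-H)) s^{H-1/2} ∫_0^s (s-r)^{-1/2-H} r^{1/2-H} b(r,X_r) dr`,
one has the Novikov-type bound
`E[exp((1/2) ∫_0^T |v_s|² ds)] ≤ exp((1/2) C_H T^{2(1-H)} C²)`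
with `C_H = Γ(3/2-H)²/Γ(2-2H)²`. -/
theorem v_exponential_moment_bound
    {Ω : Type} [MeasurableSpace Ω] (P : Measure Ω) [IsProbabilityMeasure P]
    (d : ℕ) (hd : 1 ≤ d) (H T : ℝ) (hH0 : 0 < H) (hH : H < 1/2) (hT : 0 < T)
    (b : ℝ → EuclideanSpace ℝ (Fin d) → EuclideanSpace ℝ (Fin d))
    (hb_meas : Measurable (Function.uncurry b))
    (C : ℝ) (hb_bdd : ∀ t ∈ Set.Icc (0:ℝ) T, ∀ y, ‖b t y‖ ≤ C)
    (X : ℝ → Ω → EuclideanSpace ℝ (Fin d))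
    (hX_meas : Measurable (Function.uncurry X))
    (v : ℝ → Ω → EuclideanSpace ℝ (Fin d))
    (hv : ∀ s ω, v s ω = ((Real.Gamma (1/2 - H))⁻¹ * s ^ (H - 1/2)) •
        ∫ r in Set.Ioc (0:ℝ) s, ((s - r) ^ (-(1/2) - H) * r ^ (1/2 - H)) • b r (X r ω)) :
    ∫ ω, Real.exp ((1/2) * ∫ s in Set.Ioc (0:ℝ) T, ‖v s ω‖ ^ 2) ∂P ≤
      Real.exp ((1/2) * (Real.Gamma (3/2 - H) ^ 2 / Real.Gamma (2 - 2*H) ^ 2) *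
        T ^ (2*(1 - H)) * C ^ 2) := by
  have hα : 0 < 1/2 - H := by linarith
  have hΓ1 : 0 < Real.Gamma (1/2 - H) := Real.Gamma_pos_of_pos hα
  have hΓ3 : 0 < Real.Gamma (3/2 - H) := Real.Gamma_pos_of_pos (by linarith)
  have hΓ2 : 0 < Real.Gamma (2 - 2*H) := Real.Gamma_pos_of_pos (by linarith)
  have hC : 0 ≤ C := le_trans (norm_nonneg (b 0 0)) (hb_bdd 0 ⟨le_rfl, hT.le⟩ 0)
  set K : ℝ := Real.Gamma (3/2 - H) / Real.Gamma (2 - 2*H) * C with hKdef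
  have hK : 0 ≤ K := mul_nonneg (div_nonneg hΓ3.le hΓ2.le) hC
  -- pointwise bound on the norm of v
  have hvb : ∀ ω : Ω, ∀ s ∈ Set.Ioc (0:ℝ) T, ‖v s ω‖ ≤ K * s ^ (1/2 - H) := by
    intro ω s hs
    have hs0 : 0 < s := hs.1
    rw [hv, norm_smul, Real.norm_eq_abs,
      abs_of_pos (mul_pos (inv_pos.mpr hΓ1) (Real.rpow_pos_of_pos hs0 _))]
    have hexp : (-(1/2) - H : ℝ) = (1/2 - H) - 1 := by ring
    have step1 : ‖∫ r in Set.Ioc (0:ℝ) s, ((s - r) ^ (-(1/2) - H) * r ^ (1/2 - H)) • b r (X r ω)‖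
        ≤ ∫ r in Set.Ioc (0:ℝ) s, C * ((s - r) ^ ((1/2 - H) - 1) * r ^ (1/2 - H)) := by
      refine le_trans (norm_integral_le_integral_norm _) ?_
      refine integral_mono_of_nonneg (Filter.Eventually.of_forall fun r => norm_nonneg _)
        ((beta_Ioc_integrable hα hs0).const_mul C) ?_
      filter_upwards [ae_restrict_mem measurableSet_Ioc] with r hr
      have hr0 : (0:ℝ) ≤ r := hr.1.le
      have hsr : (0:ℝ) ≤ s - r := by linarith [hr.2]
      have hw : (0:ℝ) ≤ (s - r) ^ (-(1/2) - H) * r ^ (1/2 - H) :=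
        mul_nonneg (Real.rpow_nonneg hsr _) (Real.rpow_nonneg hr0 _)
      rw [norm_smul, Real.norm_eq_abs, abs_of_nonneg hw, hexp, mul_comm C]
      exact mul_le_mul_of_nonneg_left
        (hb_bdd r ⟨hr0, le_trans hr.2 hs.2⟩ (X r ω)) (hexp ▸ hw)
    calc (Real.Gamma (1/2 - H))⁻¹ * s ^ (H - 1/2) *
          ‖∫ r in Set.Ioc (0:ℝ) s, ((s - r) ^ (-(1/2) - H) * r ^ (1/2 - H)) • b r (X r ω)‖
        ≤ (Real.Gamma (1/2 - H))⁻¹ * s ^ (H - 1/2) *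
          ∫ r in Set.Ioc (0:ℝ) s, C * ((s - r) ^ ((1/2 - H) - 1) * r ^ (1/2 - H)) := by
          exact mul_le_mul_of_nonneg_left step1
            (mul_nonneg (inv_pos.mpr hΓ1).le (Real.rpow_pos_of_pos hs0 _).le)
      _ = K * s ^ (1/2 - H) := by
          rw [integral_const_mul, beta_Ioc_value hα hs0]
          have hG3 : Real.Gamma (1/2 - H + 1) = Real.Gamma (3/2 - H) := by congr 1; ring
          have hG2 : Real.Gamma (2 * (1/2 - H) + 1) = Real.Gamma (2 - 2*H) := by congr 1; ring
          rw [hG3, hG2]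
          have hrp : s ^ (H - 1/2) * s ^ (2 * (1/2 - H)) = s ^ (1/2 - H) := by
            rw [← Real.rpow_add hs0]; ring_nf
          rw [show (Real.Gamma (1/2-H))⁻¹ * s ^ (H - 1/2) *
            (C * (s ^ (2*(1/2-H)) * (Real.Gamma (3/2-H) * Real.Gamma (1/2-H) /
              Real.Gamma (2-2*H)))) =
            (s ^ (H - 1/2) * s ^ (2 * (1/2 - H))) * C * Real.Gamma (3/2-H) /
              Real.Gamma (2-2*H) * ((Real.Gamma (1/2-H))⁻¹ * Real.Gamma (1/2-H)) by ring,
            inv_mul_cancel₀ hΓ1.ne', hrp, hKdef]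
          ring
  -- bound on the inner time-integral
  have key : ∀ ω : Ω, (∫ s in Set.Ioc (0:ℝ) T, ‖v s ω‖ ^ 2) ≤ K^2 * T ^ (2*(1-H)) := by
    intro ω
    have h2α : (-1:ℝ) < 2 * (1/2 - H) := by linarith
    have hginti : IntervalIntegrable (fun s : ℝ => s ^ (2 * (1/2 - H))) volume 0 T :=
      intervalIntegral.intervalIntegrable_rpow' h2α
    have hgint : IntegrableOn (fun s : ℝ => K^2 * s ^ (2 * (1/2 - H))) (Set.Ioc 0 T) volume := by
      rw [intervalIntegrable_iff_integrableOn_Ioc_of_le hT.le] at hginti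
      exact hginti.const_mul _
    have step : (∫ s in Set.Ioc (0:ℝ) T, ‖v s ω‖ ^ 2)
        ≤ ∫ s in Set.Ioc (0:ℝ) T, K^2 * s ^ (2 * (1/2 - H)) := by
      refine integral_mono_of_nonneg (Filter.Eventually.of_forall fun s => sq_nonneg _) hgint ?_
      filter_upwards [ae_restrict_mem measurableSet_Ioc] with s hs
      have h1 : ‖v s ω‖ ^ 2 ≤ (K * s ^ (1/2 - H)) ^ 2 :=
        pow_le_pow_left₀ (norm_nonneg _) (hvb ω s hs) 2
      refine h1.trans_eq ?_
      rw [mul_pow]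
      congr 1
      rw [← Real.rpow_natCast (s ^ (1/2 - H)) 2, ← Real.rpow_mul hs.1.le]
      norm_num [mul_comm]
    refine step.trans ?_
    rw [integral_const_mul, ← intervalIntegral.integral_of_le hT.le,
      integral_rpow (Or.inl h2α)]
    have h0 : (0:ℝ) ^ (2 * (1/2 - H) + 1) = 0 := by
      rw [Real.zero_rpow]; linarith
    rw [h0, sub_zero]
    have he : 2 * (1/2 - H) + 1 = 2 * (1 - H) := by ring
    rw [he]
    refine mul_le_mul_of_nonneg_left ?_ (sq_nonneg K)
    exact div_le_self (Real.rpow_nonneg hT.le _) (by linarith)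
  -- conclude
  have hBeq : (1/2) * (Real.Gamma (3/2 - H) ^ 2 / Real.Gamma (2 - 2*H) ^ 2) *
      T ^ (2*(1 - H)) * C ^ 2 = (1/2) * (K^2 * T ^ (2*(1-H))) := by
    rw [hKdef]; field_simp
  calc ∫ ω, Real.exp ((1/2) * ∫ s in Set.Ioc (0:ℝ) T, ‖v s ω‖ ^ 2) ∂P
      ≤ ∫ _ω, Real.exp ((1/2) * (K^2 * T ^ (2*(1-H)))) ∂P := by
        refine integral_mono_of_nonneg
          (Filter.Eventually.of_forall fun ω => (Real.exp_pos _).le)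
          (integrable_const _) (Filter.Eventually.of_forall fun ω => ?_)
        exact Real.exp_le_exp.mpr (mul_le_mul_of_nonneg_left (key ω) (by norm_num))
    _ = Real.exp ((1/2) * (K^2 * T ^ (2*(1-H)))) := by
        rw [integral_const, probReal_univ, one_smul]
    _ = Real.exp ((1/2) * (Real.Gamma (3/2 - H) ^ 2 / Real.Gamma (2 - 2*H) ^ 2) *
        T ^ (2*(1 - H)) * C ^ 2) := by rw [hBeq]

end
end
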